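/- arXiv:1901.10381 — 3 statements merged into one kernel-verified Lean document; each statement's English description precedes it below -/
import Mathlib

section
/- The Peregrine breather B = B_P satisfies, for all (t,x) ∈ ℝ², the fourth-order elliptic equation B_{xxxx} + 3 B_x² B̄ + (4|B|² − 3) B_{xx} + B² B̄_{xx} + 2|B_x|² B + (3/2)(|B|² − 1)² B = 0, where derivatives are with respect to x. -/
/-!
Write `B = e^{it} (1 - c ρ)` with `c = 4(1 + 2it)`, `k = 1 + 4t²` and `ρ = (k + 2x²)⁻¹`.
The equation is invariant under `B ↦ E B` for `|E| = 1`, so the phase `e^{it}` drops out.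
The `x`-derivatives of `ρ` are polynomials times powers of `ρ`, and since `ρ` is real,
`B̄ = 1 - c̄ ρ`. The equation thus becomes a rational identity in `c, c̄, x, ρ`, which holds
using only `c + c̄ = 8`, `c c̄ = 16 k` and `(k + 2x²) ρ = 1`.
-/

open Complex ComplexConjugate

/-- The Peregrine breather `B_P(t,x) = e^{it}(1 - 4(1+2it)/(1+4t²+2x²))`. -/
noncomputable def BP (t x : ℝ) : ℂ :=
  Complex.exp (Complex.I * (t : ℂ)) *
    (1 - 4 * (1 + 2 * Complex.I * (t : ℂ)) / (1 + 4 * (t : ℂ) ^ 2 + 2 * (x : ℂ) ^ 2))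

theorem iteratedDeriv_succ_of_hasDerivAt {𝕜 F : Type*} [NontriviallyNormedField 𝕜]
    [NormedAddCommGroup F] [NormedSpace 𝕜 F] {f f' : 𝕜 → F} (hf : ∀ x, HasDerivAt f (f' x) x)
    (n : ℕ) : iteratedDeriv (n + 1) f = iteratedDeriv n f' := by
  rw [iteratedDeriv_succ', funext fun x => (hf x).deriv]

theorem deriv_ofReal_comp (f : ℝ → ℝ) (x : ℝ) :
    deriv (fun y => (f y : ℂ)) x = deriv f x := by
  by_cases hf : DifferentiableAt ℝ f x
  · exact hf.hasDerivAt.ofReal_comp.deriv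
  · have hf' : ¬ DifferentiableAt ℝ (fun y => (f y : ℂ)) x := fun h =>
      hf (by simpa [Function.comp_def] using! reCLM.differentiableAt.comp x h)
    rw [deriv_zero_of_not_differentiableAt hf, deriv_zero_of_not_differentiableAt hf', ofReal_zero]

theorem iteratedDeriv_ofReal_comp (f : ℝ → ℝ) (n : ℕ) :
    iteratedDeriv n (fun y => (f y : ℂ)) = fun y => ((iteratedDeriv n f y : ℝ) : ℂ) := by
  induction n with
  | zero => simp
  | succ n ih => simp only [iteratedDeriv_succ, ih]; exact funext (deriv_ofReal_comp _)

noncomputable def invQuadratic (k x : ℝ) : ℝ := (k + 2 * x ^ 2)⁻¹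

section InvQuadratic

variable {k : ℝ}

theorem invQuadratic_mul (hk : 0 < k) (x : ℝ) : invQuadratic k x * (k + 2 * x ^ 2) = 1 :=
  inv_mul_cancel₀ (by positivity)

theorem hasDerivAt_invQuadratic (hk : 0 < k) (x : ℝ) :
    HasDerivAt (invQuadratic k) (-4 * x * invQuadratic k x ^ 2) x := by
  have hq : k + 2 * x ^ 2 ≠ 0 := by positivity
  refine ((((hasDerivAt_pow 2 x).const_mul 2).const_add k).fun_inv hq).congr_deriv ?_
  simp only [invQuadratic]
  field_simp
  push_cast
  ring

/-- Uses `ρ' = -4 x ρ²` and `g' ρⁿ⁺¹ = g' (k + 2x²) ρⁿ⁺²` for `ρ = invQuadratic k`. -/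
theorem HasDerivAt.mul_invQuadratic_pow {g : ℝ → ℝ} {g' x : ℝ} (hk : 0 < k)
    (hg : HasDerivAt g g' x) (n : ℕ) :
    HasDerivAt (fun y => g y * invQuadratic k y ^ (n + 1))
      ((g' * (k + 2 * x ^ 2) - 4 * (n + 1) * x * g x) * invQuadratic k x ^ (n + 2)) x := by
  refine (hg.fun_mul ((hasDerivAt_invQuadratic hk x).fun_pow (n + 1))).congr_deriv ?_
  push_cast
  linear_combination -g' * invQuadratic k x ^ (n + 1) * invQuadratic_mul hk x

theorem iteratedDeriv_invQuadratic (hk : 0 < k) :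
    iteratedDeriv 1 (invQuadratic k) = (fun x => -4 * x * invQuadratic k x ^ 2) ∧
    iteratedDeriv 2 (invQuadratic k) = (fun x => (24 * x ^ 2 - 4 * k) * invQuadratic k x ^ 3) ∧
    iteratedDeriv 4 (invQuadratic k) =
      fun x => (96 * k ^ 2 - 1920 * k * x ^ 2 + 1920 * x ^ 4) * invQuadratic k x ^ 5 := by
  have d₁ := hasDerivAt_invQuadratic hk
  have d₂ (x : ℝ) : HasDerivAt (fun y => -4 * y * invQuadratic k y ^ 2)
      ((24 * x ^ 2 - 4 * k) * invQuadratic k x ^ 3) x :=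
    (((hasDerivAt_id' x).const_mul (-4)).mul_invQuadratic_pow hk 1).congr_deriv (by ring)
  have d₃ (x : ℝ) : HasDerivAt (fun y => (24 * y ^ 2 - 4 * k) * invQuadratic k y ^ 3)
      ((96 * k * x - 192 * x ^ 3) * invQuadratic k x ^ 4) x :=
    ((((hasDerivAt_pow 2 x).const_mul 24).sub_const (4 * k)).mul_invQuadratic_pow
      hk 2).congr_deriv (by push_cast; ring)
  have d₄ (x : ℝ) : HasDerivAt (fun y => (96 * k * y - 192 * y ^ 3) * invQuadratic k y ^ 4)
      ((96 * k ^ 2 - 1920 * k * x ^ 2 + 1920 * x ^ 4) * invQuadratic k x ^ 5) x :=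
    ((((hasDerivAt_id' x).const_mul (96 * k)).fun_sub
      ((hasDerivAt_pow 3 x).const_mul 192)).mul_invQuadratic_pow hk 3).congr_deriv
      (by push_cast; ring)
  refine ⟨?_, ?_, ?_⟩
  · rw [iteratedDeriv_succ_of_hasDerivAt d₁ 0, iteratedDeriv_zero]
  · rw [iteratedDeriv_succ_of_hasDerivAt d₁ 1, iteratedDeriv_succ_of_hasDerivAt d₂ 0,
      iteratedDeriv_zero]
  · rw [iteratedDeriv_succ_of_hasDerivAt d₁ 3, iteratedDeriv_succ_of_hasDerivAt d₂ 2,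
      iteratedDeriv_succ_of_hasDerivAt d₃ 1, iteratedDeriv_succ_of_hasDerivAt d₄ 0,
      iteratedDeriv_zero]

end InvQuadratic

/-- `B₁, B₂, B₄` stand for `B_x, B_xx, B_xxxx`. -/
noncomputable def ellipticOp (B B₁ B₂ B₄ : ℂ) : ℂ :=
  B₄ + 3 * B₁ ^ 2 * conj B + (4 * (↑(‖B‖) : ℂ) ^ 2 - 3) * B₂
    + B ^ 2 * conj B₂ + 2 * (↑(‖B₁‖) : ℂ) ^ 2 * B
    + (3 / 2) * ((↑(‖B‖) : ℂ) ^ 2 - 1) ^ 2 * B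

noncomputable def ellipticPolarOp (B B' B₁ B₁' B₂ B₂' B₄ : ℂ) : ℂ :=
  B₄ + 3 * B₁ ^ 2 * B' + (4 * (B * B') - 3) * B₂ + B ^ 2 * B₂' + 2 * (B₁ * B₁') * B
    + 3 / 2 * (B * B' - 1) ^ 2 * B

theorem ellipticOp_eq_ellipticPolarOp (B B₁ B₂ B₄ : ℂ) :
    ellipticOp B B₁ B₂ B₄ = ellipticPolarOp B (conj B) B₁ (conj B₁) B₂ (conj B₂) B₄ := by
  simp only [ellipticOp, ellipticPolarOp, mul_conj']

theorem ellipticOp_mul_of_norm_eq_one {E : ℂ} (hE : ‖E‖ = 1) (B B₁ B₂ B₄ : ℂ) :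
    ellipticOp (E * B) (E * B₁) (E * B₂) (E * B₄) = E * ellipticOp B B₁ B₂ B₄ := by
  have hEE : E * conj E = 1 := by rw [mul_conj', hE]; norm_num
  simp only [ellipticOp, norm_mul, hE, one_mul, map_mul]
  linear_combination E * (3 * B₁ ^ 2 * conj B + B ^ 2 * conj B₂) * hEE

/-- Applied with `c = 4(1 + 2it)`, `c' = conj c`, `k = 1 + 4t²` and `ρ = (k + 2x²)⁻¹`. -/
theorem ellipticPolarOp_peregrine {c c' k X ρ : ℂ} (hsum : c + c' = 8) (hprod : c * c' = 16 * k)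
    (hρ : ρ * (k + 2 * X ^ 2) = 1) :
    ellipticPolarOp (1 - c * ρ) (1 - c' * ρ) (-(c * (-4 * X * ρ ^ 2))) (-(c' * (-4 * X * ρ ^ 2)))
      (-(c * ((24 * X ^ 2 - 4 * k) * ρ ^ 3))) (-(c' * ((24 * X ^ 2 - 4 * k) * ρ ^ 3)))
      (-(c * ((96 * k ^ 2 - 1920 * k * X ^ 2 + 1920 * X ^ 4) * ρ ^ 5))) = 0 := by
  obtain rfl : c' = 8 - c := by linear_combination hsum
  obtain rfl : k = c * (8 - c) / 16 := by linear_combination -hprod / 16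
  set D := c * (8 - c) / 16 + 2 * X ^ 2 with hD
  have hD0 : D ≠ 0 := right_ne_zero_of_mul_eq_one hρ
  obtain rfl := eq_inv_of_mul_eq_one_left hρ
  simp only [ellipticPolarOp]
  field_simp
  rw [hD]
  ring

theorem BP_eq (t x : ℝ) :
    BP t x = exp (I * t) * (1 - 4 * (1 + 2 * I * t) * invQuadratic (1 + 4 * t ^ 2) x) := by
  simp only [BP, invQuadratic]
  push_cast
  ring

theorem iteratedDeriv_BP (t : ℝ) {n : ℕ} (hn : 0 < n) (x : ℝ) :
    iteratedDeriv n (fun y => BP t y) x =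
      exp (I * t) * -(4 * (1 + 2 * I * t) * iteratedDeriv n (invQuadratic (1 + 4 * t ^ 2)) x) := by
  simp only [BP_eq]
  rw [iteratedDeriv_const_mul_field, iteratedDeriv_const_sub hn, iteratedDeriv_neg,
    iteratedDeriv_const_mul_field, iteratedDeriv_ofReal_comp]

/-- The Peregrine breather satisfies the fourth-order elliptic equation
`B_{xxxx} + 3 B_x² B̄ + (4|B|²-3) B_{xx} + B² B̄_{xx} + 2|B_x|² B + (3/2)(|B|²-1)² B = 0`. -/
theorem stmt_2 :
    ∀ t x : ℝ,
      iteratedDeriv 4 (fun y : ℝ => BP t y) x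
        + 3 * (iteratedDeriv 1 (fun y : ℝ => BP t y) x) ^ 2 * (starRingEnd ℂ) (BP t x)
        + (4 * (↑(‖BP t x‖) : ℂ) ^ 2 - 3) * iteratedDeriv 2 (fun y : ℝ => BP t y) x
        + (BP t x) ^ 2 * (starRingEnd ℂ) (iteratedDeriv 2 (fun y : ℝ => BP t y) x)
        + 2 * (↑(‖iteratedDeriv 1 (fun y : ℝ => BP t y) x‖) : ℂ) ^ 2 * BP t x
        + (3 / 2) * ((↑(‖BP t x‖) : ℂ) ^ 2 - 1) ^ 2 * BP t x = 0 := by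
  intro t x
  have hk : (0 : ℝ) < 1 + 4 * t ^ 2 := by positivity
  obtain ⟨h₁, h₂, h₄⟩ := iteratedDeriv_invQuadratic hk
  have hE : ‖exp (I * t)‖ = 1 := by rw [mul_comm]; exact norm_exp_ofReal_mul_I t
  change ellipticOp (BP t x) (iteratedDeriv 1 (fun y => BP t y) x)
    (iteratedDeriv 2 (fun y => BP t y) x) (iteratedDeriv 4 (fun y => BP t y) x) = 0
  rw [iteratedDeriv_BP t one_pos, iteratedDeriv_BP t two_pos, iteratedDeriv_BP t four_pos, BP_eq,
    h₁, h₂, h₄, ellipticOp_mul_of_norm_eq_one hE, ellipticOp_eq_ellipticPolarOp]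
  set c : ℂ := 4 * (1 + 2 * I * t)
  have hsum : c + conj c = 8 := by
    simp only [c, map_mul, map_ofNat, map_add, map_one, conj_I, conj_ofReal]
    ring
  have hprod : c * conj c = 16 * (1 + 4 * (t : ℂ) ^ 2) := by
    simp only [c, map_mul, map_ofNat, map_add, map_one, conj_I, conj_ofReal]
    linear_combination (-64 * (t : ℂ) ^ 2) * I_sq
  have hρ := congrArg ((↑) : ℝ → ℂ) (invQuadratic_mul hk x)
  simp only [map_sub, map_one, map_neg, map_mul, conj_ofReal]
  push_cast at hρ ⊢
  exact mul_eq_zero_of_right _ (ellipticPolarOp_peregrine hsum hprod hρ)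
end

section
/- The mass M_P[B_P(t,·)] = ∫_ℝ (|B_P(t,x)|² − 1) dx equals 0 for every t ∈ ℝ. -/
/-!
With `a = 1 + 4t²`, one has `|B_P(t,x)|² - 1 = 8 (a - 2x²) / (a + 2x²)²`, which is the derivative
of `8x / (a + 2x²)`. That primitive vanishes at both ends of the line, so the mass is zero.
-/

open Complex MeasureTheory
open Filter Topology

section RationalProfile

variable {a b : ℝ}

theorem hasDerivAt_div_add_mul_sq {x : ℝ} (hx : a + b * x ^ 2 ≠ 0) :
    HasDerivAt (fun y => y / (a + b * y ^ 2)) ((a - b * x ^ 2) / (a + b * x ^ 2) ^ 2) x := by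
  have hden : HasDerivAt (fun y => a + b * y ^ 2) (b * (2 * x)) x := by
    simpa using ((hasDerivAt_pow 2 x).const_mul b).const_add a
  exact ((hasDerivAt_id' x).div hden hx).congr_deriv (by ring)

theorem tendsto_div_add_mul_sq_atTop (hb : 0 < b) :
    Tendsto (fun y => y / (a + b * y ^ 2)) atTop (𝓝 0) := by
  have hden : Tendsto (fun y => a * y⁻¹ + b * y) atTop atTop :=
    (tendsto_inv_atTop_zero.const_mul a).add_atTop (tendsto_id.const_mul_atTop hb)
  refine ((tendsto_const_nhds (x := (1 : ℝ))).div_atTop hden).congr' ?_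
  filter_upwards [eventually_ne_atTop 0] with y hy
  rw [show a + b * y ^ 2 = y * (a * y⁻¹ + b * y) by field_simp, div_mul_cancel_left₀ hy,
    one_div]

theorem tendsto_div_add_mul_sq_atBot (hb : 0 < b) :
    Tendsto (fun y => y / (a + b * y ^ 2)) atBot (𝓝 0) := by
  simpa [neg_div] using
    ((tendsto_div_add_mul_sq_atTop (a := a) hb).comp tendsto_neg_atBot_atTop).neg

theorem integrable_sub_mul_sq_div_sq (ha : 0 < a) (hb : 0 < b) :
    Integrable fun x : ℝ => (a - b * x ^ 2) / (a + b * x ^ 2) ^ 2 := by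
  have hpos : ∀ x : ℝ, 0 < a + b * x ^ 2 := fun x => by positivity
  refine (integrable_inv_one_add_sq.const_mul (min a b)⁻¹).mono' ?_ ?_
  · exact (Continuous.div (by fun_prop) (by fun_prop)
      fun x => (pow_pos (hpos x) 2).ne').aestronglyMeasurable
  · refine Eventually.of_forall fun x => ?_
    have hlow : min a b * (1 + x ^ 2) ≤ a + b * x ^ 2 := by
      nlinarith [min_le_left a b, min_le_right a b, sq_nonneg x]
    have hnonneg : 0 ≤ b * x ^ 2 := by positivity
    calc ‖(a - b * x ^ 2) / (a + b * x ^ 2) ^ 2‖ = |a - b * x ^ 2| / (a + b * x ^ 2) ^ 2 := by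
          rw [Real.norm_eq_abs, abs_div, abs_of_pos (pow_pos (hpos x) 2)]
      _ ≤ (a + b * x ^ 2) / (a + b * x ^ 2) ^ 2 := by
          gcongr
          exact abs_le.2 ⟨by linarith, by linarith⟩
      _ = (a + b * x ^ 2)⁻¹ := by field_simp
      _ ≤ (min a b)⁻¹ * (1 + x ^ 2)⁻¹ := by
          rw [← mul_inv]
          exact inv_anti₀ (by positivity) hlow

theorem integral_sub_mul_sq_div_sq (ha : 0 < a) (hb : 0 < b) :
    ∫ x : ℝ, (a - b * x ^ 2) / (a + b * x ^ 2) ^ 2 = 0 := by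
  simpa using integral_of_hasDerivAt_of_tendsto
    (fun x => hasDerivAt_div_add_mul_sq (a := a) (b := b) (x := x) (by positivity))
    (integrable_sub_mul_sq_div_sq ha hb) (tendsto_div_add_mul_sq_atBot hb)
    (tendsto_div_add_mul_sq_atTop hb)

end RationalProfile

theorem norm_sq_BP_sub_one (t x : ℝ) :
    ‖BP t x‖ ^ 2 - 1 =
      8 * ((1 + 4 * t ^ 2 - 2 * x ^ 2) / (1 + 4 * t ^ 2 + 2 * x ^ 2) ^ 2) := by
  have hd : (0 : ℝ) < 1 + 4 * t ^ 2 + 2 * x ^ 2 := by positivity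
  have hBP : BP t x = exp (I * t) *
      (((1 + 4 * t ^ 2 + 2 * x ^ 2 - 4 : ℝ) + (-8 * t : ℝ) * I) /
        (1 + 4 * t ^ 2 + 2 * x ^ 2 : ℝ)) := by
    have hd' : ((1 + 4 * t ^ 2 + 2 * x ^ 2 : ℝ) : ℂ) ≠ 0 := by exact_mod_cast hd.ne'
    rw [BP]
    push_cast at hd' ⊢
    congr 1
    rw [eq_div_iff hd', sub_mul, div_mul_cancel₀ _ hd']
    ring
  rw [← normSq_eq_norm_sq, hBP, normSq_mul, normSq_div, normSq_add_mul_I, normSq_ofReal,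
    normSq_eq_norm_sq, norm_exp_I_mul_ofReal]
  field_simp
  ring

/-- The mass `M_P[B_P(t,·)] = ∫ (|B_P|² - 1) dx` vanishes for every time. -/
theorem stmt_5 :
    ∀ t : ℝ, (∫ x : ℝ, (‖BP t x‖ ^ 2 - 1)) = 0 := by
  intro t
  simp_rw [norm_sq_BP_sub_one, integral_const_mul]
  rw [integral_sub_mul_sq_div_sq (by positivity) two_pos, mul_zero]
end

section
/- The energy E_P[B_P(t,·)] = ∫_ℝ |∂_x B_P(t,x)|² dx − (1/2)∫_ℝ (|B_P(t,x)|² − 1)² dx equals 0 for every t ∈ ℝ. -/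
/-!
With `a = 1 + 4t²` and `r = a + 2x²`, the phase `e^{it}` drops out of both densities:
`|∂ₓB_P|² = 256 a x² / r⁴` and `|B_P|² - 1 = (8a - 16x²) / r²`. For every `a > 0` the energy
density `256 a x² / r⁴ - ½ ((8a - 16x²) / r²)²` is the derivative of the odd rational function
`(64x³/3 - 32ax) / r³`, which vanishes at `±∞`; both terms are `O(r⁻²)`, hence integrable, and the
energy is the total increment of this primitive, i.e. `0`.
-/

open Complex MeasureTheory

open Filter Topology

section

variable {a : ℝ}

lemma integrable_inv_add_two_mul_sq_sq (ha : 0 < a) :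
    Integrable fun x : ℝ => ((a + 2 * x ^ 2) ^ 2)⁻¹ := by
  set m := min a 2
  have hm : 0 < m := lt_min ha two_pos
  refine (integrable_inv_one_add_sq.const_mul (m ^ 2)⁻¹).mono'
    (by fun_prop (disch := intro x; positivity)) (ae_of_all _ fun x => ?_)
  have hlow : m * (1 + x ^ 2) ≤ a + 2 * x ^ 2 := by
    nlinarith [min_le_left a 2, min_le_right a 2, sq_nonneg x]
  have hm' : m ≤ a + 2 * x ^ 2 := by nlinarith [min_le_left a 2, sq_nonneg x]
  rw [Real.norm_of_nonneg (by positivity), ← mul_inv]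
  gcongr
  calc m ^ 2 * (1 + x ^ 2) = m * (m * (1 + x ^ 2)) := by ring
    _ ≤ (a + 2 * x ^ 2) * (a + 2 * x ^ 2) := by gcongr
    _ = (a + 2 * x ^ 2) ^ 2 := by ring

lemma integrable_kinetic (ha : 0 < a) :
    Integrable fun x : ℝ => 256 * a * x ^ 2 / (a + 2 * x ^ 2) ^ 4 := by
  refine ((integrable_inv_add_two_mul_sq_sq ha).const_mul 128).mono'
    (by fun_prop : Measurable _).aestronglyMeasurable (ae_of_all _ fun x => ?_)
  have hr : 0 < a + 2 * x ^ 2 := by positivity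
  rw [Real.norm_of_nonneg (by positivity), div_le_iff₀ (by positivity)]
  field_simp
  nlinarith [sq_nonneg (a - 2 * x ^ 2), sq_nonneg x]

lemma integrable_potential (ha : 0 < a) :
    Integrable fun x : ℝ => ((8 * a - 16 * x ^ 2) / (a + 2 * x ^ 2) ^ 2) ^ 2 := by
  refine ((integrable_inv_add_two_mul_sq_sq ha).const_mul 64).mono'
    (by fun_prop : Measurable _).aestronglyMeasurable (ae_of_all _ fun x => ?_)
  have hr : 0 < a + 2 * x ^ 2 := by positivity
  rw [Real.norm_of_nonneg (by positivity), div_pow, div_le_iff₀ (by positivity)]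
  field_simp
  nlinarith [sq_nonneg x, mul_nonneg ha.le (sq_nonneg x)]

noncomputable def energyPrimitive (a x : ℝ) : ℝ :=
  (64 / 3 * x ^ 3 - 32 * a * x) / (a + 2 * x ^ 2) ^ 3

lemma hasDerivAt_energyPrimitive (ha : 0 < a) (x : ℝ) :
    HasDerivAt (energyPrimitive a)
      (256 * a * x ^ 2 / (a + 2 * x ^ 2) ^ 4
        - 1 / 2 * ((8 * a - 16 * x ^ 2) / (a + 2 * x ^ 2) ^ 2) ^ 2) x := by
  have hr : a + 2 * x ^ 2 ≠ 0 := by positivity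
  have hnum : HasDerivAt (fun x : ℝ => 64 / 3 * x ^ 3 - 32 * a * x) (64 * x ^ 2 - 32 * a) x := by
    refine (((hasDerivAt_pow 3 x).const_mul (64 / 3)).sub
      ((hasDerivAt_id x).const_mul (32 * a))).congr_deriv ?_
    push_cast; ring
  have hden :
      HasDerivAt (fun x : ℝ => (a + 2 * x ^ 2) ^ 3) (3 * (a + 2 * x ^ 2) ^ 2 * (4 * x)) x := by
    refine ((((hasDerivAt_pow 2 x).const_mul 2).const_add a).pow 3).congr_deriv ?_
    push_cast; ring
  refine (hnum.div hden (pow_ne_zero 3 hr)).congr_deriv ?_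
  field_simp
  ring

lemma energyPrimitive_neg (a x : ℝ) : energyPrimitive a (-x) = -energyPrimitive a x := by
  simp only [energyPrimitive]; ring

open Polynomial in
lemma tendsto_energyPrimitive_atTop (a : ℝ) : Tendsto (energyPrimitive a) atTop (𝓝 0) := by
  have hdeg : (C (64 / 3) * X ^ 3 - C (32 * a) * X).degree < ((C a + C 2 * X ^ 2) ^ 3).degree := by
    have hQ : ((C a + C (2 : ℝ) * X ^ 2) ^ 3).degree = 6 := by compute_degree!
    have hP : (C (64 / 3 : ℝ) * X ^ 3 - C (32 * a) * X).degree ≤ 3 := by compute_degree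
    rw [hQ]
    exact hP.trans_lt (by norm_num)
  convert div_tendsto_atTop_zero_of_degree_lt _ _ hdeg using 1
  ext x
  simp [energyPrimitive]

lemma tendsto_energyPrimitive_atBot (a : ℝ) : Tendsto (energyPrimitive a) atBot (𝓝 0) := by
  have h := ((tendsto_energyPrimitive_atTop a).comp tendsto_neg_atBot_atTop).neg
  simpa [Function.comp_def, energyPrimitive_neg] using h

lemma integral_kinetic_eq_half_integral_potential (ha : 0 < a) :
    ∫ x : ℝ, 256 * a * x ^ 2 / (a + 2 * x ^ 2) ^ 4
      = 1 / 2 * ∫ x : ℝ, ((8 * a - 16 * x ^ 2) / (a + 2 * x ^ 2) ^ 2) ^ 2 := by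
  have hpot := (integrable_potential ha).const_mul (1 / 2)
  have h := integral_of_hasDerivAt_of_tendsto (hasDerivAt_energyPrimitive ha)
    ((integrable_kinetic ha).sub hpot) (tendsto_energyPrimitive_atBot a)
    (tendsto_energyPrimitive_atTop a)
  rw [integral_sub (integrable_kinetic ha) hpot, integral_const_mul, sub_self] at h
  exact sub_eq_zero.1 h

end

lemma ofReal_peregrine_denom (t x : ℝ) :
    ((1 + 4 * t ^ 2 + 2 * x ^ 2 : ℝ) : ℂ) = 1 + 4 * (t : ℂ) ^ 2 + 2 * (x : ℂ) ^ 2 := by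
  push_cast; ring

lemma peregrine_denom_ne_zero (t x : ℝ) : 1 + 4 * (t : ℂ) ^ 2 + 2 * (x : ℂ) ^ 2 ≠ 0 := by
  rw [← ofReal_peregrine_denom]
  exact_mod_cast (by positivity : (0 : ℝ) < 1 + 4 * t ^ 2 + 2 * x ^ 2).ne'

lemma hasDerivAt_BP (t x : ℝ) :
    HasDerivAt (BP t)
      (exp (I * t) * (16 * (1 + 2 * I * t) * x / (1 + 4 * (t : ℂ) ^ 2 + 2 * (x : ℂ) ^ 2) ^ 2))
      x := by
  have hden :
      HasDerivAt (fun y : ℝ => 1 + 4 * (t : ℂ) ^ 2 + 2 * (y : ℂ) ^ 2) (2 * (2 * (x : ℂ))) x := by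
    simpa using (((hasDerivAt_pow 2 (x : ℂ)).const_mul 2).const_add
      (1 + 4 * (t : ℂ) ^ 2)).comp_ofReal
  refine ((((hasDerivAt_const x (4 * (1 + 2 * I * t))).div hden
    (peregrine_denom_ne_zero t x)).const_sub 1).const_mul (exp (I * t))).congr_deriv ?_
  ring

lemma norm_deriv_BP_sq (t x : ℝ) :
    ‖deriv (fun y : ℝ => BP t y) x‖ ^ 2
      = 256 * (1 + 4 * t ^ 2) * x ^ 2 / (1 + 4 * t ^ 2 + 2 * x ^ 2) ^ 4 := by
  have h1 : ‖1 + 2 * I * t‖ ^ 2 = 1 + 4 * t ^ 2 := by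
    rw [show 1 + 2 * I * t = ((1 : ℝ) : ℂ) + ((2 * t : ℝ) : ℂ) * I by push_cast; ring,
      Complex.sq_norm, normSq_add_mul_I]
    ring
  rw [(hasDerivAt_BP t x).deriv, ← ofReal_peregrine_denom, norm_mul, norm_exp_I_mul_ofReal,
    one_mul, norm_div, norm_pow, norm_real, norm_mul, norm_mul, div_pow, mul_pow, mul_pow, h1,
    Real.norm_of_nonneg (by positivity)]
  simp [sq_abs]
  ring

lemma norm_BP_sq_sub_one (t x : ℝ) :
    ‖BP t x‖ ^ 2 - 1
      = (8 * (1 + 4 * t ^ 2) - 16 * x ^ 2) / (1 + 4 * t ^ 2 + 2 * x ^ 2) ^ 2 := by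
  set r : ℝ := 1 + 4 * t ^ 2 + 2 * x ^ 2 with hr_def
  have hr : 0 < r := by positivity
  have hBP : BP t x = exp (I * t) * (((r - 4 : ℝ) : ℂ) + ((-8 * t : ℝ) : ℂ) * I) / (r : ℂ) := by
    have hr' : (r : ℂ) ≠ 0 := by exact_mod_cast hr.ne'
    rw [BP, ← ofReal_peregrine_denom, ← hr_def]
    field_simp
    push_cast
    ring
  rw [hBP, norm_div, norm_mul, norm_exp_I_mul_ofReal, one_mul, div_pow, Complex.sq_norm,
    normSq_add_mul_I, norm_real, Real.norm_of_nonneg hr.le]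
  field_simp
  ring

/-- The energy `E_P[B_P(t,·)] = ∫ |∂ₓB_P|² - (1/2)∫ (|B_P|²-1)²` vanishes for every time. -/
theorem stmt_6 :
    ∀ t : ℝ,
      (∫ x : ℝ, ‖deriv (fun y : ℝ => BP t y) x‖ ^ 2)
        - (1 / 2) * ∫ x : ℝ, (‖BP t x‖ ^ 2 - 1) ^ 2 = 0 := by
  intro t
  simp only [norm_deriv_BP_sq, norm_BP_sq_sub_one]
  rw [integral_kinetic_eq_half_integral_potential (by positivity), sub_self]
end
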